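/- arXiv:2604.18617 — 3 statements merged into one kernel-verified Lean document; each statement's English description precedes it below -/
import Mathlib

section
/- Let d_n be defined by the exponential generating function Σ_{n≥0} d_n z^n/n! = (1/(1-z))·(exp(z/(1-z)) - 1). Then d_n = Σ_{ℓ=1}^{n} (n!/ℓ!)·C(n,ℓ), and in particular d_1 = 1, d_2 = 5, d_3 = 28, d_4 = 185, d_5 = 1426, d_6 = 12607. -/
/-!
Since `X / (1 - X)` is divisible by `X`, the `n`-th coefficient of `exp (X / (1 - X))`, and
hence of its product with `1 / (1 - X)`, can be computed from any partial sum
`∑_{m ≤ N} (X / (1 - X))^m / m!` with `N ≥ n`. Termwise, `X^m / (1 - X)^(m + 1)` has `n`-th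
coefficient `C(n, m)`, so the `n`-th coefficient of the right-hand side is
`∑_{m=1}^{n} C(n, m) / m!`; multiplying by `n!` gives `d n`.
-/

open PowerSeries

/-- The formal exponential exp(f) of a power series f (intended for f with zero constant
term): its n-th coefficient is the n-th coefficient of Σ_{m=0}^{n} f^m/m!, which is the
X-adic limit of the exponential partial sums. -/
noncomputable def formalExp (f : PowerSeries ℚ) : PowerSeries ℚ :=
  PowerSeries.mk fun n =>
    PowerSeries.coeff n (∑ m ∈ Finset.range (n + 1), ((m.factorial : ℚ)⁻¹) • f ^ m)

open Finset

theorem PowerSeries.inv_one_sub_X {k : Type*} [Field k] : (1 - X : k⟦X⟧)⁻¹ = mk 1 :=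
  ((eq_inv_iff_mul_eq_one (by simp)).mpr (mk_one_mul_one_sub_eq_one k)).symm

theorem PowerSeries.coeff_inv_one_sub_X_mul_pow {k : Type*} [Field k] (m n : ℕ) :
    coeff n ((1 - X : k⟦X⟧)⁻¹ * (X * (1 - X)⁻¹) ^ m) = (n.choose m : k) := by
  rw [mul_pow, mul_left_comm, ← pow_succ', inv_one_sub_X, mk_one_pow_eq_mk_choose_add,
    coeff_X_pow_mul', coeff_mk]
  split_ifs with hmn
  · rw [Nat.add_sub_cancel' hmn]
  · rw [Nat.choose_eq_zero_of_lt (not_le.mp hmn), Nat.cast_zero]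

noncomputable def expPartialSum (n : ℕ) (f : ℚ⟦X⟧) : ℚ⟦X⟧ :=
  ∑ m ∈ range (n + 1), (m.factorial : ℚ)⁻¹ • f ^ m

theorem coeff_formalExp (n : ℕ) (f : ℚ⟦X⟧) :
    coeff n (formalExp f) = coeff n (expPartialSum n f) :=
  coeff_mk _ _

theorem coeff_expPartialSum_X_mul {i n : ℕ} (h : ℚ⟦X⟧) (hin : i ≤ n) :
    coeff i (expPartialSum n (X * h)) = coeff i (formalExp (X * h)) := by
  have htail : coeff i (∑ m ∈ Ico (i + 1) (n + 1), (m.factorial : ℚ)⁻¹ • (X * h) ^ m) = 0 := by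
    refine (map_sum _ _ _).trans (sum_eq_zero fun m hm => ?_)
    rw [coeff_smul, mul_pow, coeff_X_pow_mul', if_neg (by simp at hm; omega), smul_zero]
  rw [coeff_formalExp, expPartialSum, ← sum_range_add_sum_Ico _ (by omega : i + 1 ≤ n + 1),
    map_add, htail, add_zero, expPartialSum]

theorem trunc_formalExp_X_mul (n : ℕ) (h : ℚ⟦X⟧) :
    trunc (n + 1) (formalExp (X * h)) = trunc (n + 1) (expPartialSum n (X * h)) := by
  ext i
  simp only [coeff_trunc]
  split_ifs with hi
  · exact (coeff_expPartialSum_X_mul h (Nat.lt_succ_iff.mp hi)).symm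
  · rfl

theorem coeff_inv_one_sub_X_mul_expPartialSum (n : ℕ) :
    coeff n ((1 - X : ℚ⟦X⟧)⁻¹ * expPartialSum n (X * (1 - X)⁻¹))
      = ∑ m ∈ range (n + 1), (n.choose m : ℚ) / m.factorial := by
  simp only [expPartialSum, mul_sum, mul_smul_comm, map_sum, coeff_smul,
    coeff_inv_one_sub_X_mul_pow, smul_eq_mul]
  exact sum_congr rfl fun m _ => inv_mul_eq_div _ _

theorem coeff_inv_one_sub_X_mul_formalExp (n : ℕ) :
    coeff n ((1 - X : ℚ⟦X⟧)⁻¹ * formalExp (X * (1 - X)⁻¹))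
      = ∑ m ∈ range (n + 1), (n.choose m : ℚ) / m.factorial := by
  rw [coeff_mul_eq_coeff_trunc_mul_trunc _ _ n.lt_succ_self, trunc_formalExp_X_mul,
    ← coeff_mul_eq_coeff_trunc_mul_trunc _ _ n.lt_succ_self, coeff_inv_one_sub_X_mul_expPartialSum]

theorem coeff_inv_one_sub_X_mul_formalExp_sub_one (n : ℕ) :
    coeff n ((1 - X : ℚ⟦X⟧)⁻¹ * (formalExp (X * (1 - X)⁻¹) - 1))
      = ∑ ℓ ∈ Icc 1 n, (n.choose ℓ : ℚ) / ℓ.factorial := by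
  rw [mul_sub, mul_one, map_sub, coeff_inv_one_sub_X_mul_formalExp, range_eq_Ico,
    sum_eq_sum_Ico_succ_bot (by omega : 0 < n + 1), Ico_add_one_right_eq_Icc, inv_one_sub_X,
    coeff_mk]
  simp

/-- If Σ_{n≥0} d_n z^n/n! = (1/(1-z))·(exp(z/(1-z)) - 1) then
d_n = Σ_{ℓ=1}^{n} (n!/ℓ!)·C(n,ℓ), and d_1 = 1, d_2 = 5, d_3 = 28, d_4 = 185,
d_5 = 1426, d_6 = 12607. -/
theorem stmt5 (d : ℕ → ℚ)
    (h : PowerSeries.mk (fun n => d n / n.factorial)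
        = (1 - PowerSeries.X)⁻¹ *
            (formalExp (PowerSeries.X * (1 - PowerSeries.X)⁻¹) - 1)) :
    (∀ n, d n = ∑ ℓ ∈ Finset.Icc 1 n, (n.factorial / ℓ.factorial : ℚ) * (n.choose ℓ : ℚ))
    ∧ d 1 = 1 ∧ d 2 = 5 ∧ d 3 = 28 ∧ d 4 = 185 ∧ d 5 = 1426 ∧ d 6 = 12607 := by
  have hd : ∀ n, d n = ∑ ℓ ∈ Icc 1 n, (n.factorial / ℓ.factorial : ℚ) * (n.choose ℓ : ℚ) := by
    intro n
    have hn := congrArg (coeff n) h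
    rw [coeff_mk, coeff_inv_one_sub_X_mul_formalExp_sub_one,
      div_eq_iff (Nat.cast_ne_zero.mpr n.factorial_ne_zero)] at hn
    rw [hn, sum_mul]
    exact sum_congr rfl fun ℓ _ => by ring
  refine ⟨hd, ?_, ?_, ?_, ?_, ?_, ?_⟩ <;>
  · rw [hd]
    norm_num [sum_Icc_succ_top, Nat.factorial, Nat.choose]
end

section
/- For every k ≥ 2 and n ≥ 0, the expected decompressed size of a uniformly random k-ary chain with n internal nodes equals Σ_{ℓ=1}^{n} ((k-1)^{ℓ-1}/ℓ!) · C(n,ℓ). -/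
/-- The number of internal nodes of the decompressed tree of the k-ary chain encoded by
the pointer table t, truncated at node i: s_0 = 0 (the sink decompresses to a leaf) and
s_{i+1} = 1 + s_i + Σ_{j=1}^{k-1} s_{t(i,j)}, where t i j is the target of the (j+1)-st
pointer of node i+1. (The `min` is only a termination guard, the identity under the
hypothesis t i j ≤ i.) -/
def karySize (k : ℕ) (t : ℕ → ℕ → ℕ) : ℕ → ℕ
  | 0 => 0
  | (i + 1) => 1 + karySize k t i + ∑ j ∈ Finset.range (k - 1), karySize k t (min (t i j) i)
termination_by i => i
decreasing_by
  · omega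
  · omega

/-!
Average the size of the decompressed tree over the pointer table. Node `m + 1` contributes
itself, the tree of node `m`, and for each of its `k - 1` further pointers the tree of a target
that is uniform on `{0, …, m}` and independent of the earlier rows. The tree of node `v` only
depends on the rows below `v`, so its mean size `E v` does not depend on how many rows are
drawn. Hence `E 0 = 0` and `E (m + 1) = 1 + E m + (k - 1) / (m + 1) * ∑_{v ≤ m} E v`, and by
Pascal's rule and the hockey-stick identity the closed form satisfies the same recurrence.
-/

open Finset
open scoped BigOperators

theorem Nat.sum_range_choose_eq_choose_succ (n ℓ : ℕ) :
    ∑ m ∈ range n, m.choose ℓ = n.choose (ℓ + 1) := by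
  induction n with
  | zero => simp
  | succ n ih => rw [sum_range_succ, ih, Nat.choose_succ_succ', add_comm]

section ClosedForm

variable {K : Type*} [Field K]

def closedForm (c : K) (n : ℕ) : K :=
  ∑ ℓ ∈ Icc 1 n, c ^ (ℓ - 1) / ℓ.factorial * (n.choose ℓ : K)

lemma closedForm_zero (c : K) : closedForm c 0 = 0 := by simp [closedForm]

lemma closedForm_eq_sum_range (c : K) {n N : ℕ} (hN : n ≤ N) :
    closedForm c n = ∑ ℓ ∈ range N, c ^ ℓ / (ℓ + 1).factorial * (n.choose (ℓ + 1) : K) := by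
  rw [closedForm, ← Ico_add_one_right_eq_Icc, sum_Ico_eq_sum_range, add_tsub_cancel_right]
  simp only [add_comm 1, add_tsub_cancel_right]
  refine sum_subset (range_subset_range.2 hN) fun ℓ _ hℓ => ?_
  rw [Nat.choose_eq_zero_of_lt (by simpa using hℓ)]
  simp

lemma closedForm_succ [CharZero K] (c : K) (n : ℕ) :
    closedForm c (n + 1)
      = 1 + closedForm c n + c * (∑ m ∈ range (n + 1), closedForm c m) / (n + 1) := by
  set a : ℕ → K := fun ℓ => c ^ ℓ / (ℓ + 1).factorial
  have hpartial : ∑ m ∈ range (n + 1), closedForm c m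
      = ∑ ℓ ∈ range (n + 1), a ℓ * ((n + 1).choose (ℓ + 2) : K) := by
    rw [sum_congr rfl fun m hm => closedForm_eq_sum_range c (N := n + 1) (mem_range.1 hm).le,
      sum_comm]
    refine sum_congr rfl fun ℓ _ => ?_
    rw [← mul_sum, ← Nat.cast_sum, Nat.sum_range_choose_eq_choose_succ]
  have hstep : ∀ ℓ, c * (a ℓ * ((n + 1).choose (ℓ + 2) : K)) / (n + 1)
      = a (ℓ + 1) * (n.choose (ℓ + 1) : K) := by
    intro ℓ
    have h : ((n + 1) * n.choose (ℓ + 1) : K) = (n + 1).choose (ℓ + 2) * (ℓ + 2) := by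
      exact_mod_cast Nat.add_one_mul_choose_eq n (ℓ + 1)
    simp only [a, Nat.factorial_succ (ℓ + 1), Nat.cast_mul, pow_succ]
    have hf : ((ℓ + 1).factorial : K) ≠ 0 := Nat.cast_ne_zero.2 (Nat.factorial_ne_zero _)
    have hℓ : (ℓ : K) + 1 + 1 ≠ 0 := by norm_cast
    push_cast
    field_simp
    linear_combination (-(c * c ^ ℓ)) * h
  have hpascal : closedForm c (n + 1)
      = closedForm c n + ∑ ℓ ∈ range (n + 2), a ℓ * (n.choose ℓ : K) := by
    rw [closedForm_eq_sum_range c (N := n + 2) (by omega),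
      closedForm_eq_sum_range c (N := n + 2) (by omega), ← sum_add_distrib]
    refine sum_congr rfl fun ℓ _ => ?_
    rw [Nat.choose_succ_succ', Nat.cast_add]
    ring
  have hconst : a 0 * (n.choose 0 : K) = 1 := by simp [a]
  rw [hpascal, sum_range_succ', hconst, hpartial, mul_sum, sum_div,
    sum_congr rfl fun ℓ _ => hstep ℓ]
  ring

end ClosedForm

theorem karySize_congr {k m : ℕ} {g g' : ℕ → ℕ → ℕ}
    (h : ∀ i < m, ∀ j < k - 1, g i j = g' i j) : karySize k g m = karySize k g' m := by
  induction m using Nat.strong_induction_on with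
  | _ m ih =>
    cases m with
    | zero => rw [karySize, karySize]
    | succ i =>
      have hlt : ∀ m ≤ i, ∀ i' < m, ∀ j < k - 1, g i' j = g' i' j :=
        fun m hm i' hi' j hj => h i' (by omega) j hj
      rw [karySize, karySize, ih i (by omega) (hlt i le_rfl)]
      refine congrArg _ (sum_congr rfl fun j hj => ?_)
      rw [h i (by omega) j (mem_range.1 hj)]
      exact ih _ (by omega) (hlt _ (min_le_right _ _))

lemma Fintype.expect_prod_type {α β M : Type*} [Fintype α] [Fintype β] [AddCommMonoid M]
    [Module ℚ≥0 M] (f : α × β → M) : 𝔼 p, f p = 𝔼 a, 𝔼 b, f (a, b) := by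
  rw [← univ_product_univ, expect_product]

lemma Fintype.expect_eval {ι β M : Type*} [Fintype ι] [DecidableEq ι] [Fintype β] [Nonempty β]
    [AddCommMonoid M] [Module ℚ≥0 M] (j : ι) (h : β → M) : 𝔼 r : ι → β, h (r j) = 𝔼 b, h b := by
  rw [Fintype.expect_equiv (Equiv.funSplitAt j β) (fun r => h (r j)) (fun p => h p.1) fun _ => rfl,
    Fintype.expect_prod_type]
  simp only [Fintype.expect_const]

namespace KaryChain

-- The tables of the statement, with the constraint `t i j ≤ i` built into the type.
abbrev PointerTable (k m : ℕ) : Type := ∀ i : Fin m, Fin (k - 1) → Fin (i + 1)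

namespace PointerTable

variable {k m : ℕ}

def toFun (t : PointerTable k m) : ℕ → ℕ → ℕ :=
  fun i j => if h : i < m ∧ j < k - 1 then t ⟨i, h.1⟩ ⟨j, h.2⟩ else 0

lemma card : Fintype.card (PointerTable k m) = m.factorial ^ (k - 1) := by
  simp [Fintype.card_pi, prod_pow, Fin.prod_univ_eq_prod_range (· + 1),
    prod_range_add_one_eq_factorial]

def snoc (t : PointerTable k m) (r : Fin (k - 1) → Fin (m + 1)) : PointerTable k (m + 1) :=
  Fin.snoc t r

lemma toFun_snoc_of_lt (t : PointerTable k m) (r : Fin (k - 1) → Fin (m + 1)) {i : ℕ}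
    (hi : i < m) (j : ℕ) : (t.snoc r).toFun i j = t.toFun i j := by
  simp [toFun, snoc, Fin.snoc, hi, Nat.lt_succ_of_lt hi]

lemma toFun_snoc_self (t : PointerTable k m) (r : Fin (k - 1) → Fin (m + 1)) {j : ℕ}
    (hj : j < k - 1) : (t.snoc r).toFun m j = r ⟨j, hj⟩ := by
  simp [toFun, snoc, Fin.snoc, hj]

lemma karySize_snoc_of_le (t : PointerTable k m) (r : Fin (k - 1) → Fin (m + 1)) {v : ℕ}
    (hv : v ≤ m) : karySize k (t.snoc r).toFun v = karySize k t.toFun v :=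
  karySize_congr fun _ hi j _ => toFun_snoc_of_lt t r (by omega) j

lemma karySize_snoc_succ (t : PointerTable k m) (r : Fin (k - 1) → Fin (m + 1)) :
    karySize k (t.snoc r).toFun (m + 1)
      = 1 + karySize k t.toFun m + ∑ j, karySize k t.toFun (r j) := by
  rw [karySize, karySize_snoc_of_le t r le_rfl, ← Fin.sum_univ_eq_sum_range]
  congr 1
  refine Fintype.sum_congr _ _ fun j => ?_
  have hr : (r j : ℕ) ≤ m := Nat.lt_succ_iff.1 (r j).isLt
  rw [toFun_snoc_self t r j.isLt, min_eq_left hr, karySize_snoc_of_le t r hr]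

lemma expect_snoc {M : Type*} [AddCommMonoid M] [Module ℚ≥0 M]
    (f : PointerTable k (m + 1) → M) :
    𝔼 s, f s = 𝔼 t : PointerTable k m, 𝔼 r, f (t.snoc r) := by
  rw [← Fintype.expect_equiv (Fin.snocEquiv _) (fun p => f (snoc p.2 p.1)) f fun _ => rfl,
    Fintype.expect_prod_type, Finset.expect_comm]
  rfl

end PointerTable

open PointerTable

def meanSize (k m v : ℕ) : ℚ := 𝔼 t : PointerTable k m, (karySize k t.toFun v : ℚ)

lemma meanSize_succ_of_le {k m v : ℕ} (hv : v ≤ m) : meanSize k (m + 1) v = meanSize k m v := by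
  simp only [meanSize, expect_snoc, karySize_snoc_of_le _ _ hv, Fintype.expect_const]

lemma meanSize_of_le {k m v : ℕ} (hv : v ≤ m) : meanSize k m v = meanSize k v v := by
  induction m, hv using Nat.le_induction with
  | base => rfl
  | succ m hvm ih => rw [meanSize_succ_of_le hvm, ih]

lemma meanSize_succ_self (k m : ℕ) :
    meanSize k (m + 1) (m + 1)
      = 1 + meanSize k m m + (k - 1 : ℕ) * (∑ v ∈ range (m + 1), meanSize k v v) / (m + 1) := by
  have hpointer : ∀ t : PointerTable k m, ∀ j : Fin (k - 1),
      𝔼 r : Fin (k - 1) → Fin (m + 1), (karySize k t.toFun (r j) : ℚ)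
        = 𝔼 v : Fin (m + 1), (karySize k t.toFun v : ℚ) :=
    fun t j => Fintype.expect_eval j fun v : Fin (m + 1) => (karySize k t.toFun v : ℚ)
  have hearlier : (∑ v ∈ range (m + 1), meanSize k v v) / (m + 1)
      = 𝔼 v : Fin (m + 1), meanSize k m v := by
    rw [Fintype.expect_eq_sum_div_card, Fintype.card_fin,
      Fin.sum_univ_eq_sum_range (meanSize k m ·),
      sum_congr rfl fun v hv => meanSize_of_le (Nat.lt_succ_iff.1 (mem_range.1 hv)),
      Nat.cast_add_one]
  rw [mul_div_assoc, hearlier]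
  simp only [meanSize, expect_snoc, karySize_snoc_succ, Nat.cast_add, Nat.cast_one, Nat.cast_sum,
    expect_add_distrib, expect_sum_comm, hpointer, sum_const, card_univ, Fintype.card_fin,
    nsmul_eq_mul, Fintype.expect_const, ← mul_expect]
  rw [expect_comm]

theorem meanSize_self_eq_closedForm (k m : ℕ) :
    meanSize k m m = closedForm ((k - 1 : ℕ) : ℚ) m := by
  induction m using Nat.strong_induction_on with
  | _ m ih =>
    cases m with
    | zero => simp [meanSize, karySize, closedForm_zero]
    | succ m =>
      rw [meanSize_succ_self, closedForm_succ, ih m (by omega),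
        sum_congr rfl fun v hv => ih v (mem_range.1 hv)]

lemma sum_filter_karySize_div_eq_meanSize (k n : ℕ) :
    (∑ t ∈ (univ : Finset (Fin n → Fin (k - 1) → Fin (n + 1))).filter
        (fun t => ∀ (i : Fin n) (j : Fin (k - 1)), (t i j : ℕ) ≤ (i : ℕ)),
      (karySize k
        (fun i j => if h : i < n ∧ j < k - 1 then (t ⟨i, h.1⟩ ⟨j, h.2⟩ : ℕ) else 0) n : ℚ))
      / (n.factorial : ℚ) ^ (k - 1) = meanSize k n n := by
  rw [meanSize, Fintype.expect_eq_sum_div_card, PointerTable.card, Nat.cast_pow]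
  congr 1
  refine sum_bij' (fun t ht i j => ⟨t i j, Nat.lt_succ_of_le ((mem_filter.1 ht).2 i j)⟩)
    (fun s _ i j => Fin.castLE (Nat.succ_le_succ i.isLt.le) (s i j)) (fun _ _ => mem_univ _)
    (fun s _ => mem_filter.2 ⟨mem_univ _, fun i j => Nat.lt_succ_iff.1 (s i j).isLt⟩)
    (fun _ _ => rfl) (fun _ _ => rfl) (fun _ _ => rfl)

end KaryChain

/-- for k ≥ 2 and n ≥ 0, the expected decompressed size of a uniformly
random k-ary chain with n internal nodes (the average over the (n!)^{k-1} pointer tables)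
equals Σ_{ℓ=1}^{n} ((k-1)^{ℓ-1}/ℓ!)·C(n,ℓ). -/
theorem stmt13 (k n : ℕ) (hk : 2 ≤ k) :
    (∑ t ∈ (Finset.univ : Finset (Fin n → Fin (k - 1) → Fin (n + 1))).filter
        (fun t => ∀ (i : Fin n) (j : Fin (k - 1)), (t i j : ℕ) ≤ (i : ℕ)),
      (karySize k
        (fun i j => if h : i < n ∧ j < k - 1 then (t ⟨i, h.1⟩ ⟨j, h.2⟩ : ℕ) else 0) n : ℚ))
      / (n.factorial : ℚ) ^ (k - 1)
    = ∑ ℓ ∈ Finset.Icc 1 n, (k - 1 : ℚ) ^ (ℓ - 1) / ℓ.factorial * (n.choose ℓ : ℚ) := by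
  rw [KaryChain.sum_filter_karySize_div_eq_meanSize, KaryChain.meanSize_self_eq_closedForm,
    Nat.cast_sub (by omega : 1 ≤ k), Nat.cast_one]
  rfl
end

section
/- For the sequence E_n = Σ_{ℓ=0}^{n} C(n,ℓ)/ℓ!, there exist constants 0 < c_1 < c_2 such that c_1 · e^{2√n}/n^{1/4} ≤ E_n ≤ c_2 · e^{2√n}/n^{1/4} for all sufficiently large n. -/
/-!
Write `x = √n`. Since `C(n,ℓ) ≤ n^ℓ/ℓ!`, the `ℓ`-th term of `E_n` is at most `(x^ℓ/ℓ!)²`, and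
Stirling's lower bound for `ℓ!` gives `x^ℓ/ℓ! ≤ e^x/√x` uniformly in `ℓ`; bounding one factor this
way and summing the other against `∑ x^ℓ/ℓ! ≤ e^x` gives `E_n ≤ e^{2x}/√x`.

Conversely `C(n,ℓ) ≥ (n+1-ℓ)^ℓ/ℓ! ≥ (x-1)^{2ℓ}/ℓ!` for `ℓ ≤ 2x`, and Stirling's upper bound for
`ℓ!` shows `(x-1)^ℓ/ℓ! ≳ e^x/√x` whenever `ℓ` is within `√x` of `x - 1`. These `≈ n^{1/4}` terms
alone contribute `≳ n^{1/4} e^{2x}/x = e^{2x}/√x`.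
-/

open Real Finset Nat

lemma factorial_le_exp_one_mul_sqrt_mul_pow {ℓ : ℕ} (hℓ : ℓ ≠ 0) :
    (ℓ ! : ℝ) ≤ exp 1 * √ℓ * (ℓ / exp 1) ^ ℓ := by
  obtain ⟨m, rfl⟩ := Nat.exists_eq_succ_of_ne_zero hℓ
  have hseq : Stirling.stirlingSeq (m + 1) ≤ exp 1 / √2 := by
    simpa [Stirling.stirlingSeq_one] using Stirling.stirlingSeq'_antitone (Nat.zero_le m)
  rw [Stirling.stirlingSeq, div_le_iff₀ (by positivity)] at hseq
  calc ((m + 1) ! : ℝ) ≤ exp 1 / √2 * (√(2 * ↑(m + 1)) * (↑(m + 1) / exp 1) ^ (m + 1)) := hseq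
    _ = exp 1 * √↑(m + 1) * (↑(m + 1) / exp 1) ^ (m + 1) := by
      rw [sqrt_mul zero_le_two]; field_simp

lemma sqrt_two_mul_mul_pow_le_factorial (ℓ : ℕ) :
    √(2 * ℓ) * (ℓ / exp 1) ^ ℓ ≤ ℓ ! := by
  refine le_trans ?_ (Stirling.le_factorial_stirling ℓ)
  gcongr
  nlinarith [pi_gt_three, (Nat.cast_nonneg ℓ : (0 : ℝ) ≤ ℓ)]

lemma pow_le_exp_mul_sub_one {r : ℝ} (hr : 0 ≤ r) (ℓ : ℕ) : r ^ ℓ ≤ exp (ℓ * (r - 1)) := by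
  rw [exp_nat_mul]
  exact pow_le_pow_left₀ hr (by linarith [add_one_le_exp (r - 1)]) ℓ

lemma pow_div_factorial_le_exp_div_sqrt {x : ℝ} (hx : 0 ≤ x) {ℓ : ℕ} (hℓ : ℓ ≠ 0) :
    x ^ ℓ / ℓ ! ≤ exp x / √(2 * ℓ) := by
  have hℓ' : (0 : ℝ) < ℓ := by positivity
  have hpow : (x / ℓ) ^ ℓ ≤ exp (x - ℓ) := by
    convert pow_le_exp_mul_sub_one (div_nonneg hx hℓ'.le) ℓ using 2
    field_simp
  calc x ^ ℓ / ℓ ! ≤ x ^ ℓ / (√(2 * ℓ) * (ℓ / exp 1) ^ ℓ) := by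
        gcongr
        exact sqrt_two_mul_mul_pow_le_factorial ℓ
    _ = (x / ℓ) ^ ℓ * exp ℓ / √(2 * ℓ) := by
        rw [div_pow, div_pow, ← exp_one_pow]; field_simp
    _ ≤ exp (x - ℓ) * exp ℓ / √(2 * ℓ) := by gcongr
    _ = exp x / √(2 * ℓ) := by rw [← exp_add, sub_add_cancel]

lemma pow_div_factorial_le_exp_div_sqrt_self {x : ℝ} (hx : 64 ≤ x) (ℓ : ℕ) :
    x ^ ℓ / ℓ ! ≤ exp x / √x := by
  have hsqrt : √x ≤ exp (x / 8) := by
    have : √x ≤ x / 8 := by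
      rw [sqrt_le_left (by positivity)]; nlinarith
    linarith [add_one_le_exp (x / 8)]
  rcases le_or_gt (2 * (ℓ : ℝ)) x with hsmall | hlarge
  · have htwo : (2 : ℝ) ≤ exp (3 / 4) := by
      nlinarith [quadratic_le_exp_of_nonneg (x := 3 / 4) (by norm_num)]
    calc x ^ ℓ / ℓ ! = 2 ^ ℓ * ((x / 2) ^ ℓ / ℓ !) := by rw [div_pow]; field_simp
      _ ≤ exp (3 / 4) ^ ℓ * exp (x / 2) := by
          gcongr
          exact pow_div_factorial_le_exp _ (by positivity) ℓ
      _ ≤ exp x / exp (x / 8) := by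
          rw [← exp_nat_mul, ← exp_add, ← exp_sub]
          gcongr
          linarith
      _ ≤ exp x / √x := by gcongr
  · have hℓ : ℓ ≠ 0 := by rintro rfl; norm_num at hlarge; linarith
    calc x ^ ℓ / ℓ ! ≤ exp x / √(2 * ℓ) := pow_div_factorial_le_exp_div_sqrt (by linarith) hℓ
      _ ≤ exp x / √x := by gcongr

lemma choose_div_factorial_le_sq (n ℓ : ℕ) :
    (n.choose ℓ : ℝ) / ℓ ! ≤ (√n ^ ℓ / ℓ !) ^ 2 := by
  calc (n.choose ℓ : ℝ) / ℓ ! ≤ (n : ℝ) ^ ℓ / ℓ ! / ℓ ! := by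
        gcongr; exact Nat.choose_le_pow_div ℓ n
    _ = (√n ^ ℓ / ℓ !) ^ 2 := by
        rw [div_pow, ← pow_mul, mul_comm ℓ, pow_mul, sq_sqrt (Nat.cast_nonneg n)]; ring

lemma sq_pow_div_factorial_le_choose_div_factorial {n ℓ : ℕ} {y : ℝ}
    (hyn : y ^ 2 + ℓ ≤ n + 1) : (y ^ ℓ / ℓ !) ^ 2 ≤ (n.choose ℓ : ℝ) / ℓ ! := by
  have hℓn : ℓ ≤ n + 1 := by exact_mod_cast (le_add_of_nonneg_left (sq_nonneg y)).trans hyn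
  have hchoose := Nat.pow_le_choose (α := ℝ) ℓ n
  rw [Nat.cast_sub hℓn] at hchoose
  calc (y ^ ℓ / ℓ !) ^ 2 = (y ^ 2) ^ ℓ / ℓ ! / ℓ ! := by ring
    _ ≤ ((n + 1 : ℕ) - ℓ : ℝ) ^ ℓ / ℓ ! / ℓ ! := by
        gcongr; push_cast; linarith
    _ ≤ (n.choose ℓ : ℝ) / ℓ ! := by gcongr

lemma sum_choose_div_factorial_le {n : ℕ} (hn : 64 ≤ √n) :
    ∑ ℓ ∈ range (n + 1), (n.choose ℓ : ℝ) / ℓ ! ≤ exp (2 * √n) / √√n := by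
  set x := √(n : ℝ)
  calc ∑ ℓ ∈ range (n + 1), (n.choose ℓ : ℝ) / ℓ !
      ≤ ∑ ℓ ∈ range (n + 1), exp x / √x * (x ^ ℓ / ℓ !) := by
        refine sum_le_sum fun ℓ _ => (choose_div_factorial_le_sq n ℓ).trans ?_
        rw [sq]
        exact mul_le_mul_of_nonneg_right (pow_div_factorial_le_exp_div_sqrt_self hn ℓ)
          (by positivity)
    _ = exp x / √x * ∑ ℓ ∈ range (n + 1), x ^ ℓ / ℓ ! := by rw [mul_sum]
    _ ≤ exp x / √x * exp x := by gcongr; exact sum_le_exp_of_nonneg (sqrt_nonneg _) _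
    _ = exp (2 * x) / √x := by rw [two_mul, exp_add]; ring

lemma exp_sub_sq_div_le_pow_div_factorial {y : ℝ} (hy : 0 < y) {ℓ : ℕ} (hℓ : ℓ ≠ 0) :
    exp (y - (ℓ - y) ^ 2 / y) / (exp 1 * √ℓ) ≤ y ^ ℓ / ℓ ! := by
  have hℓ' : (0 : ℝ) < ℓ := by positivity
  -- `y - (ℓ - y)² / y = ℓ (2 - ℓ / y)`, so this is `pow_le_exp_mul_sub_one` at `r = ℓ / y`.
  have hpow : (ℓ / y) ^ ℓ ≤ exp (ℓ * (ℓ / y - 1)) := pow_le_exp_mul_sub_one (by positivity) ℓ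
  have hexp : exp (y - (ℓ - y) ^ 2 / y) * ℓ ^ ℓ ≤ y ^ ℓ * exp ℓ := by
    rw [div_pow, div_le_iff₀ (by positivity)] at hpow
    calc exp (y - (ℓ - y) ^ 2 / y) * ℓ ^ ℓ
        ≤ exp (y - (ℓ - y) ^ 2 / y) * (exp (ℓ * (ℓ / y - 1)) * y ^ ℓ) := by gcongr
      _ = y ^ ℓ * exp ℓ := by
        rw [← mul_assoc, ← exp_add, mul_comm]
        congr 2
        field_simp
        ring
  calc exp (y - (ℓ - y) ^ 2 / y) / (exp 1 * √ℓ)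
      ≤ y ^ ℓ * exp ℓ / ℓ ^ ℓ / (exp 1 * √ℓ) := by
        gcongr
        rw [le_div_iff₀ (by positivity)]
        exact hexp
    _ = y ^ ℓ / (exp 1 * √ℓ * (ℓ / exp 1) ^ ℓ) := by
        rw [div_pow, exp_one_pow]
        field_simp
    _ ≤ y ^ ℓ / ℓ ! := by
        gcongr
        exact factorial_le_exp_one_mul_sqrt_mul_pow hℓ

lemma exp_two_mul_sub_div_le_choose_div_factorial {n ℓ : ℕ} (hℓ : ℓ ≠ 0) {y : ℝ} (hy : 0 < y)
    (hyn : y ^ 2 + ℓ ≤ n + 1) (hdev : (ℓ - y) ^ 2 ≤ 2 * y) :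
    exp (2 * y - 6) / ℓ ≤ (n.choose ℓ : ℝ) / ℓ ! := by
  have hℓ' : (0 : ℝ) < ℓ := by positivity
  have hterm : exp (y - 2) / (exp 1 * √ℓ) ≤ y ^ ℓ / ℓ ! := by
    refine le_trans ?_ (exp_sub_sq_div_le_pow_div_factorial hy hℓ)
    gcongr
    rw [div_le_iff₀ hy]
    linarith
  have hexp : exp (2 * y - 6) = exp (y - 2) ^ 2 / exp 1 ^ 2 := by
    rw [← exp_nat_mul, ← exp_nat_mul, ← exp_sub]
    push_cast
    ring_nf
  calc exp (2 * y - 6) / ℓ = (exp (y - 2) / (exp 1 * √ℓ)) ^ 2 := by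
        rw [hexp, div_pow, mul_pow, sq_sqrt hℓ'.le]
        ring
    _ ≤ (y ^ ℓ / ℓ !) ^ 2 := by gcongr
    _ ≤ (n.choose ℓ : ℝ) / ℓ ! := sq_pow_div_factorial_le_choose_div_factorial hyn

lemma exp_two_mul_sqrt_sub_div_le_choose_div_factorial {n ℓ : ℕ} (hn : 3 ≤ √n)
    (hdev : (ℓ - (√n - 1)) ^ 2 ≤ √n) :
    exp (2 * √n - 8) / (2 * √n) ≤ (n.choose ℓ : ℝ) / ℓ ! := by
  set X := √(n : ℝ)
  have hXsq : X ^ 2 = n := sq_sqrt (Nat.cast_nonneg n)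
  have hℓX : (ℓ : ℝ) ≤ 2 * X := by nlinarith
  have hℓ : ℓ ≠ 0 := by
    rintro rfl
    push_cast at hdev
    nlinarith
  calc exp (2 * X - 8) / (2 * X) ≤ exp (2 * (X - 1) - 6) / ℓ := by
        rw [show 2 * (X - 1) - 6 = 2 * X - 8 by ring]
        gcongr
    _ ≤ (n.choose ℓ : ℝ) / ℓ ! :=
        exp_two_mul_sub_div_le_choose_div_factorial hℓ (by linarith) (by nlinarith) (by linarith)

lemma exp_two_mul_sqrt_div_le_sum_choose_div_factorial {n : ℕ} (hn : 16 ≤ √n) :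
    exp (-8) / 4 * exp (2 * √n) / √√n ≤ ∑ ℓ ∈ range (n + 1), (n.choose ℓ : ℝ) / ℓ ! := by
  set X := √(n : ℝ)
  set s := Nat.sqrt n
  set k := Nat.sqrt s
  have hXsq : X ^ 2 = n := sq_sqrt (Nat.cast_nonneg n)
  have hsX : (s : ℝ) ≤ X := Real.nat_sqrt_le_real_sqrt
  have hXs : X < s + 1 := Real.real_sqrt_lt_nat_sqrt_succ
  have hks : (k : ℝ) ^ 2 ≤ s := by exact_mod_cast Nat.sqrt_le' s
  have hsk : (s : ℝ) < (k + 1) ^ 2 := by exact_mod_cast Nat.lt_succ_sqrt' s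
  have hk_le_s : (k : ℝ) ≤ s := by exact_mod_cast Nat.sqrt_le_self s
  have hterm : ∀ ℓ ∈ Ico s (s + k), exp (2 * X - 8) / (2 * X) ≤ (n.choose ℓ : ℝ) / ℓ ! := by
    intro ℓ hℓ
    rw [mem_Ico] at hℓ
    have hℓs : (s : ℝ) ≤ ℓ := by exact_mod_cast hℓ.1
    have hℓk : (ℓ : ℝ) + 1 ≤ s + k := by exact_mod_cast hℓ.2
    exact exp_two_mul_sqrt_sub_div_le_choose_div_factorial (by linarith) (by nlinarith)
  have hk : √X / 2 ≤ k := by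
    by_contra! h
    have hX2 : √X ^ 2 = X := sq_sqrt (by positivity)
    have hq : 4 ≤ √X := by rw [le_sqrt (by norm_num) (by positivity)]; linarith
    nlinarith [mul_self_lt_mul_self (by positivity : (0 : ℝ) ≤ k + 1)
      (by linarith : (k : ℝ) + 1 < √X / 2 + 1)]
  have hsub : Ico s (s + k) ⊆ range (n + 1) := by
    intro ℓ hℓ
    rw [mem_Ico] at hℓ
    have hℓk : (ℓ : ℝ) + 1 ≤ s + k := by exact_mod_cast hℓ.2
    rw [mem_range]
    exact_mod_cast (by nlinarith : (ℓ : ℝ) < n + 1)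
  calc exp (-8) / 4 * exp (2 * X) / √X = √X / 2 * (exp (2 * X - 8) / (2 * X)) := by
        rw [sub_eq_add_neg, exp_add]
        field_simp
        rw [sq_sqrt (sqrt_nonneg _)]
        ring
    _ ≤ k * (exp (2 * X - 8) / (2 * X)) := by gcongr
    _ ≤ ∑ ℓ ∈ Ico s (s + k), (n.choose ℓ : ℝ) / ℓ ! := by
        simpa using card_nsmul_le_sum _ _ _ hterm
    _ ≤ ∑ ℓ ∈ range (n + 1), (n.choose ℓ : ℝ) / ℓ ! :=
        sum_le_sum_of_subset_of_nonneg hsub fun _ _ _ => by positivity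

lemma rpow_one_div_four_eq_sqrt_sqrt {x : ℝ} (hx : 0 ≤ x) : x ^ ((1 : ℝ) / 4) = √√x := by
  rw [sqrt_eq_rpow, sqrt_eq_rpow, ← rpow_mul hx]
  norm_num

/-- for E_n = Σ_{ℓ=0}^{n} C(n,ℓ)/ℓ! there are constants 0 < c₁ < c₂ with
c₁·e^{2√n}/n^{1/4} ≤ E_n ≤ c₂·e^{2√n}/n^{1/4} for all sufficiently large n. -/
theorem stmt14 :
    ∃ c₁ c₂ : ℝ, 0 < c₁ ∧ c₁ < c₂ ∧ ∃ N : ℕ, ∀ n : ℕ, N ≤ n →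
      c₁ * Real.exp (2 * Real.sqrt n) / (n : ℝ) ^ ((1 : ℝ) / 4)
          ≤ ∑ ℓ ∈ Finset.range (n + 1), (n.choose ℓ : ℝ) / ℓ.factorial
      ∧ ∑ ℓ ∈ Finset.range (n + 1), (n.choose ℓ : ℝ) / ℓ.factorial
          ≤ c₂ * Real.exp (2 * Real.sqrt n) / (n : ℝ) ^ ((1 : ℝ) / 4) := by
  refine ⟨exp (-8) / 4, 1, by positivity, ?_, 4096, fun n hn => ?_⟩
  · linarith [exp_lt_one_iff.mpr (by norm_num : (-8 : ℝ) < 0)]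
  have h64 : 64 ≤ √(n : ℝ) := by
    rw [le_sqrt (by norm_num) (Nat.cast_nonneg n)]
    exact_mod_cast (by omega : 64 ^ 2 ≤ n)
  rw [rpow_one_div_four_eq_sqrt_sqrt (Nat.cast_nonneg n), one_mul]
  exact ⟨exp_two_mul_sqrt_div_le_sum_choose_div_factorial (by linarith),
    sum_choose_div_factorial_le h64⟩
end
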